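/- arXiv:1809.08813 — 2 statements merged into one kernel-verified Lean document; each statement's English description precedes it below -/
import Mathlib

section
/- Let A be a positive normalized linear functional on L, let f ∈ C^n([a,b]) with n ≥ 3, and let g ∈ L with f∘g ∈ L. Then LR(f,g,a,b,A) = f[a,a;b] · A[(g−a1)(g−b1)] + Σ_{k=2}^{n-2} f[a,a; b,…,b (k times)] · A[(g−a1)^2 (g−b1)^{k−1}] + A(R_2(g)), where R_2(t) = (t−a)^2 (t−b)^{n−2} · f[t; a,a; b,…,b ((n−2) times)]. -/
/-- Divided difference of `f` at a (sorted) list of points, with repeated points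
handled via derivatives (taken within the set `s`). -/
noncomputable def divDiff (s : Set ℝ) (f : ℝ → ℝ) : List ℝ → ℝ
  | [] => 0
  | [x] => f x
  | x :: y :: l =>
    if x = (y :: l).getLast (List.cons_ne_nil y l) then
      iteratedDerivWithin (l.length + 1) f s x / Nat.factorial (l.length + 1)
    else
      (divDiff s f (y :: l) - divDiff s f (x :: (y :: l).dropLast)) /
        ((y :: l).getLast (List.cons_ne_nil y l) - x)
termination_by l => l.length
decreasing_by
  all_goals simp [List.length_dropLast]

/-! The identity holds pointwise before `A` is applied: for every `x`, `f x` minus its linear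
interpolant at `a, b` is the Hermite expansion of `f` at the nodes `a, a, b, …, b` with remainder
`(x - a)² (x - b)ᵐ [a, a, x, b, …, b]`, and `A` is linear with `A 1 = 1`. The expansion rests on
the two exchange rules `[aⁱ, x, bʲ⁺¹] (x - b) = [aⁱ, x, bʲ] - [aⁱ, bʲ⁺¹]` and
`[aⁱ⁺¹, x, bʲ] (x - a) = [aⁱ, x, bʲ] - [aⁱ⁺¹, bʲ]`, obtained from the defining recurrence of
`divDiff` (drop the first versus the last node) by a joint induction on `i` and `j`. Iterating the
first gives the Newton expansion of `[a, a, x]` in the nodes `b`, and the leading terms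
`f a + [a, a] (x - a) + [a, a, b] (x - a)²` regroup into the linear interpolant plus
`[a, a, b] (x - a) (x - b)`. -/

section DividedDifferences

variable {s : Set ℝ} {f : ℝ → ℝ}

theorem divDiff_singleton (u : ℝ) : divDiff s f [u] = f u := by
  rw [divDiff]

theorem divDiff_cons_append_singleton_mul {u c : ℝ} (huc : u ≠ c) (l : List ℝ) :
    divDiff s f (u :: (l ++ [c])) * (c - u) =
      divDiff s f (l ++ [c]) - divDiff s f (u :: l) := by
  obtain ⟨v, l', hl⟩ := List.exists_cons_of_ne_nil (List.concat_ne_nil c l)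
  have hlast : (v :: l').getLast (List.cons_ne_nil v l') = c := by
    simp only [← hl, List.getLast_concat]
  have hdrop : (v :: l').dropLast = l := by rw [← hl, List.dropLast_concat]
  rw [hl, divDiff, if_neg (by rw [hlast]; exact huc), hlast, hdrop,
    div_mul_cancel₀ _ (sub_ne_zero.mpr huc.symm)]

theorem divDiff_cons_append_replicate_succ_mul {a b : ℝ} (hab : a ≠ b) (l : List ℝ) (j : ℕ) :
    divDiff s f (a :: (l ++ List.replicate (j + 1) b)) * (b - a) =
      divDiff s f (l ++ List.replicate (j + 1) b) -
        divDiff s f (a :: (l ++ List.replicate j b)) := by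
  rw [List.replicate_succ', ← List.append_assoc]
  exact divDiff_cons_append_singleton_mul hab _

variable {a b x : ℝ}

theorem divDiff_cons_replicate_succ_mul_sub (j : ℕ) :
    divDiff s f (x :: List.replicate (j + 1) b) * (x - b) =
      divDiff s f (x :: List.replicate j b) - divDiff s f (List.replicate (j + 1) b) := by
  by_cases hxb : x = b
  · subst hxb
    rw [sub_self, mul_zero, List.replicate_succ, sub_self]
  · have h := divDiff_cons_append_singleton_mul (s := s) (f := f) hxb (List.replicate j b)
    rw [← List.replicate_succ'] at h
    linear_combination -h

theorem divDiff_mul_sub_left_of_right (hab : a ≠ b) (i : ℕ)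
    (hright : ∀ j, divDiff s f (List.replicate i a ++ x :: List.replicate (j + 1) b) * (x - b) =
      divDiff s f (List.replicate i a ++ x :: List.replicate j b) -
        divDiff s f (List.replicate i a ++ List.replicate (j + 1) b)) (j : ℕ) :
    divDiff s f (List.replicate (i + 1) a ++ x :: List.replicate j b) * (x - a) =
      divDiff s f (List.replicate i a ++ x :: List.replicate j b) -
        divDiff s f (List.replicate (i + 1) a ++ List.replicate j b) := by
  induction j with
  | zero =>
    by_cases hxa : x = a
    · subst hxa
      simp [List.replicate_succ']
    · have h := divDiff_cons_append_singleton_mul (s := s) (f := f) (Ne.symm hxa)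
        (List.replicate i a)
      simpa [List.replicate_succ] using h
  | succ j ih =>
    have hx := divDiff_cons_append_replicate_succ_mul (s := s) (f := f) hab
      (List.replicate i a ++ [x]) j
    have ha := divDiff_cons_append_replicate_succ_mul (s := s) (f := f) hab (List.replicate i a) j
    have hr := hright j
    simp only [List.replicate_succ, List.cons_append, List.nil_append, List.append_assoc]
      at hx ha hr ih ⊢
    apply mul_right_cancel₀ (sub_ne_zero.mpr hab.symm)
    linear_combination (x - a) * hx + ha - ih + hr

theorem divDiff_mul_sub_right (hab : a ≠ b) : ∀ i j : ℕ,
    divDiff s f (List.replicate i a ++ x :: List.replicate (j + 1) b) * (x - b) =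
      divDiff s f (List.replicate i a ++ x :: List.replicate j b) -
        divDiff s f (List.replicate i a ++ List.replicate (j + 1) b)
  | 0, j => by simpa using divDiff_cons_replicate_succ_mul_sub j
  | i + 1, j => by
    have hx := divDiff_cons_append_replicate_succ_mul (s := s) (f := f) hab
      (List.replicate i a ++ [x]) j
    have ha := divDiff_cons_append_replicate_succ_mul (s := s) (f := f) hab (List.replicate i a) j
    have hr := divDiff_mul_sub_right hab i j
    have hl := divDiff_mul_sub_left_of_right hab i (divDiff_mul_sub_right hab i) j
    simp only [List.replicate_succ, List.cons_append, List.nil_append, List.append_assoc]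
      at hx ha hr hl ⊢
    apply mul_right_cancel₀ (sub_ne_zero.mpr hab.symm)
    linear_combination (x - b) * hx + ha + hr - hl

theorem divDiff_mul_sub_left (hab : a ≠ b) (i j : ℕ) :
    divDiff s f (List.replicate (i + 1) a ++ x :: List.replicate j b) * (x - a) =
      divDiff s f (List.replicate i a ++ x :: List.replicate j b) -
        divDiff s f (List.replicate (i + 1) a ++ List.replicate j b) :=
  divDiff_mul_sub_left_of_right hab i (divDiff_mul_sub_right hab i) j

theorem divDiff_append_singleton_eq_sum_add (hab : a ≠ b) (i : ℕ) : ∀ m : ℕ,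
    divDiff s f (List.replicate i a ++ [x]) =
      (∑ k ∈ Finset.Icc 1 m,
        divDiff s f (List.replicate i a ++ List.replicate k b) * (x - b) ^ (k - 1)) +
        divDiff s f (List.replicate i a ++ x :: List.replicate m b) * (x - b) ^ m
  | 0 => by simp
  | m + 1 => by
    rw [Finset.sum_Icc_succ_top (by omega), divDiff_append_singleton_eq_sum_add hab i m,
      Nat.add_sub_cancel]
    linear_combination -(x - b) ^ m * divDiff_mul_sub_right hab i m

theorem sub_linear_interpolation_eq_hermite (hab : a ≠ b) {m : ℕ} (hm : 1 ≤ m) (x : ℝ) :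
    f x - (b - x) / (b - a) * f a - (x - a) / (b - a) * f b =
      divDiff s f [a, a, b] * ((x - a) * (x - b)) +
      (∑ k ∈ Finset.Icc 2 m,
        divDiff s f (a :: a :: List.replicate k b) * ((x - a) ^ 2 * (x - b) ^ (k - 1))) +
      (x - a) ^ 2 * (x - b) ^ m * divDiff s f (a :: a :: x :: List.replicate m b) := by
  have hx₁ := divDiff_mul_sub_left (s := s) (f := f) (x := x) hab 0 0
  have hx₂ := divDiff_mul_sub_left (s := s) (f := f) (x := x) hab 1 0
  have hb₁ := divDiff_cons_append_singleton_mul (s := s) (f := f) hab []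
  have hb₂ := divDiff_cons_append_singleton_mul (s := s) (f := f) hab [a]
  have hnewton := divDiff_append_singleton_eq_sum_add (s := s) (f := f) (x := x) hab 2 m
  rw [← Finset.insert_Icc_add_one_left_eq_Icc hm, Finset.sum_insert (by simp)] at hnewton
  simp only [List.replicate, List.cons_append, List.nil_append, List.append_nil, divDiff_singleton]
    at hx₁ hx₂ hb₁ hb₂ hnewton
  have hsum : (∑ k ∈ Finset.Icc 2 m,
      divDiff s f (a :: a :: List.replicate k b) * ((x - a) ^ 2 * (x - b) ^ (k - 1))) =
      (x - a) ^ 2 *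
        ∑ k ∈ Finset.Icc 2 m, divDiff s f (a :: a :: List.replicate k b) * (x - b) ^ (k - 1) := by
    rw [Finset.mul_sum]
    exact Finset.sum_congr rfl fun k _ => by ring
  rw [hsum]
  field_simp [sub_ne_zero.mpr hab.symm]
  linear_combination (a - b) * hx₁ + (a - b) * (x - a) * hx₂ + (b - a) * (x - a) ^ 2 * hnewton +
      (b - a) * (x - a) * hb₂ + (x - a) * hb₁

end DividedDifferences

theorem lemma21_m_eq_two_general {E : Type*}
    (a b : ℝ) (hab : a < b) (n : ℕ) (hn : 3 ≤ n)
    (f : ℝ → ℝ)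
    (A : (E → ℝ) →ₗ[ℝ] ℝ)
    (hA1 : A (fun _ => (1 : ℝ)) = 1)
    (g : E → ℝ) :
    A (fun t => f (g t)) - (b - A g) / (b - a) * f a - (A g - a) / (b - a) * f b =
      divDiff (Set.Icc a b) f [a, a, b] * A (fun t => (g t - a) * (g t - b)) +
      (∑ k ∈ Finset.Icc 2 (n - 2),
        divDiff (Set.Icc a b) f (a :: a :: List.replicate k b) *
          A (fun t => (g t - a) ^ 2 * (g t - b) ^ (k - 1))) +
      A (fun t => (g t - a) ^ 2 * (g t - b) ^ (n - 2) *
          divDiff (Set.Icc a b) f (a :: a :: g t :: List.replicate (n - 2) b)) := by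
  set s := Set.Icc a b
  have hba : b - a ≠ 0 := sub_ne_zero.mpr hab.ne'
  have hexpand : (fun t => f (g t)) =
      f a • (fun _ => (1 : ℝ)) + ((f b - f a) / (b - a)) • (fun t => g t - a) +
      divDiff s f [a, a, b] • (fun t => (g t - a) * (g t - b)) +
      (∑ k ∈ Finset.Icc 2 (n - 2),
        divDiff s f (a :: a :: List.replicate k b) •
          fun t => (g t - a) ^ 2 * (g t - b) ^ (k - 1)) +
      (fun t => (g t - a) ^ 2 * (g t - b) ^ (n - 2) *
          divDiff s f (a :: a :: g t :: List.replicate (n - 2) b)) := by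
    funext t
    have h := sub_linear_interpolation_eq_hermite (s := s) (f := f) hab.ne
      (by omega : 1 ≤ n - 2) (g t)
    simp only [Pi.add_apply, Pi.smul_apply, Finset.sum_apply, smul_eq_mul]
    field_simp at h ⊢
    linear_combination h
  have hAg : A (fun t => g t - a) = A g - a := by
    rw [show (fun t => g t - a) = g - a • fun _ => (1 : ℝ) by funext t; simp,
      map_sub, map_smul, hA1, smul_eq_mul, mul_one]
  simp only [hexpand, map_add, map_smul, map_sum, hA1, hAg, smul_eq_mul]
  field_simp
  ring

/-- Identity (2.4) of Lemma 2.1: the `(2, n-2)` Hermite expansion of the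
Edmundson–Lah–Ribarič difference `LR(f,g,a,b,A)`. -/
theorem lemma21_m_eq_two {E : Type*} [Nonempty E]
    (a b : ℝ) (hab : a < b) (n : ℕ) (hn : 3 ≤ n)
    (f : ℝ → ℝ) (hf : ContDiffOn ℝ n f (Set.Icc a b))
    (A : (E → ℝ) →ₗ[ℝ] ℝ)
    (hApos : ∀ h : E → ℝ, (∀ t, 0 ≤ h t) → 0 ≤ A h)
    (hA1 : A (fun _ => (1 : ℝ)) = 1)
    (g : E → ℝ) (hg : ∀ t, g t ∈ Set.Icc a b) :
    A (fun t => f (g t)) - (b - A g) / (b - a) * f a - (A g - a) / (b - a) * f b =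
      divDiff (Set.Icc a b) f [a, a, b] * A (fun t => (g t - a) * (g t - b)) +
      (∑ k ∈ Finset.Icc 2 (n - 2),
        divDiff (Set.Icc a b) f (a :: a :: List.replicate k b) *
          A (fun t => (g t - a) ^ 2 * (g t - b) ^ (k - 1))) +
      A (fun t => (g t - a) ^ 2 * (g t - b) ^ (n - 2) *
          divDiff (Set.Icc a b) f (a :: a :: g t :: List.replicate (n - 2) b)) :=
  lemma21_m_eq_two_general a b hab n hn f A hA1 g
end

section
/- Let A be a positive normalized linear functional on L, let n ≥ 3 be odd, let f ∈ C^n([a,b]) be n-convex, and let g ∈ L with f∘g ∈ L. Then Σ_{k=2}^{n-1} f[a; b,…,b (k times)] · A[(g−a1)(g−b1)^{k−1}] ≤ LR(f,g,a,b,A) ≤ f[a,a;b] · A[(g−a1)(g−b1)] + Σ_{k=2}^{n-2} f[a,a; b,…,b (k times)] · A[(g−a1)^2 (g−b1)^{k−1}]. If instead f is n-convex and n is even, both inequality signs are reversed. -/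
/-!
Newton's expansion of `f` in the nodes `a, b, b, …` (resp. `a, a, b, …`) writes `f x` as its
chord plus the sums of the statement plus a remainder `r · (x - a) (x - b) ^ (n - 1)` (resp.
`r · (x - a) ^ 2 (x - b) ^ (n - 2)`), where `r` is a divided difference of order `n`. Once `r ≥ 0`,
the sign of `(x - b) ^ m` on `[a, b]` is `(-1) ^ m`, and applying the positive functional `A`
gives the bounds.

For `r ≥ 0`, with `c = n - 1` (resp. `c = n - 2`): `[x, a, b^c]` is a slope of
`φ y = [y, b^c] = R y / (y - b) ^ c`, where `R` is the Taylor remainder of `f` at `b`, and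
`[x, a, a, b^c]` compares that slope with `φ' a = [a, a, b^c]`. So it suffices that `φ` is
increasing (resp. convex) on `[a, b)`. The numerators of `φ'` and `φ''` are the first members of
chains of successive derivatives that vanish at `b` and end in `f^(n) y · (y - b)`
(resp. `f^(n) y · (y - b) ^ 2`), and this fixes their signs.
-/

open Finset

namespace divDiff

variable {s : Set ℝ} {f : ℝ → ℝ}

@[simp]
lemma singleton (x : ℝ) : divDiff s f [x] = f x := by
  simp [divDiff]

lemma cons_append_singleton {x b : ℝ} (l : List ℝ) (hx : x ≠ b) :
    divDiff s f (x :: (l ++ [b])) = (divDiff s f (l ++ [b]) - divDiff s f (x :: l)) / (b - x) := by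
  cases l with
  | nil => simp [divDiff, hx]
  | cons y l =>
    have hdrop : (y :: (l ++ [b])).dropLast = y :: l := by
      rw [← List.cons_append, List.dropLast_concat]
    rw [List.cons_append, divDiff.eq_3, hdrop]
    simp [hx]

lemma cons_append_replicate_succ {x b : ℝ} (l : List ℝ) (k : ℕ) (hx : x ≠ b) :
    divDiff s f (x :: (l ++ List.replicate (k + 1) b)) =
      (divDiff s f (l ++ List.replicate (k + 1) b) - divDiff s f (x :: (l ++ List.replicate k b)))
        / (b - x) := by
  rw [List.replicate_succ', ← List.append_assoc, cons_append_singleton _ hx]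

lemma pair {x y : ℝ} (h : x ≠ y) : divDiff s f [x, y] = (f y - f x) / (y - x) := by
  simpa using cons_append_singleton (s := s) (f := f) [] h

lemma pair_mul_sub {x y : ℝ} (h : x ≠ y) : divDiff s f [x, y] * (y - x) = f y - f x := by
  rw [pair h, div_mul_cancel₀ _ (sub_ne_zero.2 h.symm)]

lemma pair_self (x : ℝ) : divDiff s f [x, x] = derivWithin f s x := by
  simp [divDiff]

lemma replicate_succ (b : ℝ) (k : ℕ) :
    divDiff s f (List.replicate (k + 1) b) = iteratedDerivWithin k f s b / k.factorial := by
  cases k with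
  | zero => simp
  | succ k =>
    have hlast : b = (b :: List.replicate k b).getLast (List.cons_ne_nil _ _) :=
      (List.getLast_replicate_succ k b).symm
    rw [List.replicate_succ, List.replicate_succ, divDiff.eq_3, if_pos hlast,
      List.length_replicate]

/-- Newton's expansion of `divDiff (x :: l)` in the repeated node `b`. -/
lemma cons_eq_sum_add {x b : ℝ} (l : List ℝ) (hx : x ≠ b) (m : ℕ) :
    divDiff s f (x :: l) =
      ∑ k ∈ range m, divDiff s f (l ++ List.replicate (k + 1) b) * (x - b) ^ k +
        divDiff s f (x :: (l ++ List.replicate m b)) * (x - b) ^ m := by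
  induction m with
  | zero => simp
  | succ m ih =>
    have hb : b - x ≠ 0 := sub_ne_zero.2 hx.symm
    rw [ih, sum_range_succ, cons_append_replicate_succ l m hx]
    field_simp
    ring

lemma cons_cons_append_replicate {x a b : ℝ} (p : List ℝ) (hxa : x ≠ a) (hxb : x ≠ b)
    (hab : a ≠ b)
    (h₀ : divDiff s f (x :: a :: p) = (divDiff s f (x :: p) - divDiff s f (a :: p)) / (x - a))
    (k : ℕ) :
    divDiff s f (x :: (a :: p ++ List.replicate k b)) =
      (divDiff s f (x :: (p ++ List.replicate k b)) - divDiff s f (a :: (p ++ List.replicate k b)))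
        / (x - a) := by
  induction k with
  | zero => simpa using h₀
  | succ k ih =>
    have hxa' : x - a ≠ 0 := sub_ne_zero.2 hxa
    have hbx : b - x ≠ 0 := sub_ne_zero.2 hxb.symm
    have hba : b - a ≠ 0 := sub_ne_zero.2 hab.symm
    rw [cons_append_replicate_succ _ k hxb, ih, cons_append_replicate_succ _ k hxb,
      List.cons_append, cons_append_replicate_succ _ k hab]
    field_simp
    ring

lemma cons_cons_replicate {x a b : ℝ} (hxa : x ≠ a) (hxb : x ≠ b) (hab : a ≠ b) (k : ℕ) :
    divDiff s f (x :: a :: List.replicate k b) =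
      (divDiff s f (x :: List.replicate k b) - divDiff s f (a :: List.replicate k b)) /
        (x - a) := by
  have hbase : divDiff s f [x, a] = (divDiff s f [x] - divDiff s f [a]) / (x - a) := by
    rw [pair hxa, ← neg_div_neg_eq, neg_sub, neg_sub, singleton, singleton]
  simpa using cons_cons_append_replicate [] hxa hxb hab hbase k

lemma cons_cons_cons_replicate {x a b : ℝ} (hxa : x ≠ a) (hxb : x ≠ b) (hab : a ≠ b) (k : ℕ) :
    divDiff s f (x :: a :: a :: List.replicate k b) =
      (divDiff s f (x :: a :: List.replicate k b) - divDiff s f (a :: a :: List.replicate k b)) /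
        (x - a) := by
  have hbase : divDiff s f [x, a, a] = (divDiff s f [x, a] - divDiff s f [a, a]) / (x - a) := by
    rw [← neg_div_neg_eq, neg_sub, neg_sub]
    simpa using cons_append_singleton (s := s) (f := f) [a] hxa
  simpa using cons_cons_append_replicate [a] hxa hxb hab hbase k

lemma hasDerivWithinAt_cons_replicate {y b : ℝ} (hf : DifferentiableWithinAt ℝ f s y)
    (hy : y ≠ b) (c : ℕ) :
    HasDerivWithinAt (fun z => divDiff s f (z :: List.replicate c b))
      (divDiff s f (y :: y :: List.replicate c b)) s y := by
  induction c with
  | zero => simpa [pair_self] using hf.hasDerivWithinAt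
  | succ c ih =>
    have hby : b - y ≠ 0 := sub_ne_zero.2 hy.symm
    have hrec : ∀ z, z ≠ b → divDiff s f (z :: List.replicate (c + 1) b) =
        (divDiff s f (List.replicate (c + 1) b) - divDiff s f (z :: List.replicate c b)) /
          (b - z) := fun z hz => by
      simpa using cons_append_replicate_succ (s := s) (f := f) [] c hz
    have hderiv := (ih.const_sub (divDiff s f (List.replicate (c + 1) b))).div
      ((hasDerivWithinAt_id y s).const_sub b) hby
    refine (hderiv.congr_of_eventuallyEq ?_ (hrec y hy)).congr_deriv ?_
    · filter_upwards [nhdsWithin_le_nhds (eventually_ne_nhds hy)] with z hz using hrec z hz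
    · rw [show y :: y :: List.replicate (c + 1) b = y :: ([y] ++ List.replicate (c + 1) b) from rfl,
        cons_append_replicate_succ _ c hy]
      simp only [List.singleton_append, id]
      rw [hrec y hy]
      field_simp
      ring

end divDiff

lemma sum_Icc_two_eq_sum_range {M : Type*} [AddCommMonoid M] (F : ℕ → M) (c : ℕ) :
    ∑ k ∈ Icc 2 (c + 1), F k = ∑ k ∈ range c, F (k + 2) := by
  rw [← Finset.Ico_add_one_right_eq_Icc, sum_Ico_eq_sum_range, show c + 1 + 1 - 2 = c by omega]
  simp only [add_comm 2]

lemma neg_one_pow_mul_sub_pow_nonneg {x b : ℝ} (hx : x ≤ b) (m : ℕ) :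
    0 ≤ (-1) ^ m * (x - b) ^ m := by
  rw [← mul_pow]
  exact pow_nonneg (by linarith) m

lemma div_sub_pow_nonneg {p y b : ℝ} {m : ℕ} (hp : 0 ≤ (-1) ^ m * p) (hy : y ≤ b) :
    0 ≤ p / (y - b) ^ m := by
  rw [← mul_div_mul_left p _ (pow_ne_zero m (by norm_num : (-1 : ℝ) ≠ 0))]
  exact div_nonneg hp (neg_one_pow_mul_sub_pow_nonneg hy m)

lemma hasDerivAt_sum_mul_sub_pow_div_factorial (C : ℕ → ℝ) (b y : ℝ) (m : ℕ) :
    HasDerivAt (fun z => ∑ i ∈ range m, C i * (z - b) ^ i / i.factorial)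
      (∑ i ∈ range (m - 1), C (i + 1) * (y - b) ^ i / i.factorial) y := by
  have hterm : ∀ k : ℕ, HasDerivAt (fun z => C (k + 1) * (z - b) ^ (k + 1) / (k + 1).factorial)
      (C (k + 1) * (y - b) ^ k / k.factorial) y := fun k => by
    refine ((((hasDerivAt_id y).sub_const b).fun_pow (k + 1)).const_mul (C (k + 1))).div_const _
      |>.congr_deriv ?_
    rw [Nat.factorial_succ]
    push_cast
    field_simp
    rfl
  obtain _ | m := m
  · simpa using hasDerivAt_const y (0 : ℝ)
  induction m with
  | zero => simpa using hasDerivAt_const y (C 0)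
  | succ m ih =>
    simpa only [sum_range_succ _ (m + 1), Nat.add_sub_cancel, sum_range_succ _ m]
      using ih.fun_add (hterm m)

lemma monotoneOn_of_forall_hasDerivWithinAt_nonneg {D : Set ℝ} (hD : Convex ℝ D)
    {q q' : ℝ → ℝ} (hq : ∀ y ∈ D, HasDerivWithinAt q (q' y) D y) (hq' : ∀ y ∈ D, 0 ≤ q' y) :
    MonotoneOn q D :=
  monotoneOn_of_hasDerivWithinAt_nonneg hD (fun y hy => (hq y hy).continuousWithinAt)
    (fun y hy => (hq y (interior_subset hy)).mono interior_subset)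
    (fun y hy => hq' y (interior_subset hy))

lemma mul_sub_le_sub_of_monotoneOn_deriv {a x : ℝ} (hax : a ≤ x) {q q' : ℝ → ℝ}
    (hq : ∀ y ∈ Set.Icc a x, HasDerivWithinAt q (q' y) (Set.Icc a x) y)
    (hq' : MonotoneOn q' (Set.Icc a x)) :
    q' a * (x - a) ≤ q x - q a := by
  have hmono : MonotoneOn (fun y => q y - q' a * y) (Set.Icc a x) :=
    monotoneOn_of_forall_hasDerivWithinAt_nonneg (convex_Icc a x)
      (fun y hy => by simpa using (hq y hy).fun_sub ((hasDerivWithinAt_id y _).const_mul (q' a)))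
      (fun y hy => sub_nonneg.2 (hq' (Set.left_mem_Icc.2 hax) hy hy.1))
  have := hmono (Set.left_mem_Icc.2 hax) (Set.right_mem_Icc.2 hax) hax
  linarith

def IsDerivChain (s : Set ℝ) (h : ℕ → ℝ → ℝ) (N : ℕ) : Prop :=
  ∀ j < N, ∀ y ∈ s, HasDerivWithinAt (h j) (h (j + 1) y) s y

lemma IsDerivChain.neg_one_pow_mul_nonneg {a b : ℝ} {h : ℕ → ℝ → ℝ} {m : ℕ}
    (hch : IsDerivChain (Set.Icc a b) h m) (hb : ∀ j < m, h j b = 0)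
    (htop : ∀ y ∈ Set.Icc a b, 0 ≤ h m y) :
    ∀ y ∈ Set.Icc a b, 0 ≤ (-1) ^ m * h 0 y := by
  induction m generalizing h with
  | zero => simpa using htop
  | succ m ih =>
    intro y hy
    have hderiv_nonneg := ih (h := fun j => h (j + 1)) (fun j hj => hch (j + 1) (by omega))
      (fun j hj => hb (j + 1) (by omega)) htop
    have hmono : MonotoneOn (fun z => (-1) ^ m * h 0 z) (Set.Icc a b) :=
      monotoneOn_of_forall_hasDerivWithinAt_nonneg (convex_Icc a b)
        (fun z hz => (hch 0 (by omega) z hz).const_mul _) hderiv_nonneg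
    have hbmem : b ∈ Set.Icc a b := Set.right_mem_Icc.2 (hy.1.trans hy.2)
    have := hmono hy hbmem hy.2
    simp only [hb 0 (by omega), mul_zero] at this
    rw [pow_succ]
    linarith

/-- `(y - b) ^ (d - j + 1)` times the derivative of `h j / (· - b) ^ (d - j)`. -/
def powQuotNumerator (b : ℝ) (d : ℕ) (h : ℕ → ℝ → ℝ) (j : ℕ) (y : ℝ) : ℝ :=
  h (j + 1) y * (y - b) - ((d : ℝ) - j) * h j y

lemma IsDerivChain.powQuotNumerator {s : Set ℝ} {h : ℕ → ℝ → ℝ} {N : ℕ}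
    (hch : IsDerivChain s h (N + 1)) (b : ℝ) (d : ℕ) :
    IsDerivChain s (powQuotNumerator b d h) N := by
  intro j hj y hy
  have hlin : HasDerivWithinAt (fun z => z - b) 1 s y := (hasDerivWithinAt_id y s).sub_const b
  refine (((hch (j + 1) (by omega) y hy).fun_mul hlin).fun_sub
    ((hch j (by omega) y hy).const_mul ((d : ℝ) - j))).congr_deriv ?_
  simp only [_root_.powQuotNumerator]
  push_cast
  ring

lemma hasDerivWithinAt_div_sub_pow {s : Set ℝ} {h : ℕ → ℝ → ℝ} {b y : ℝ}
    (hh : HasDerivWithinAt (h 0) (h 1 y) s y) (hy : y ≠ b) (d : ℕ) :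
    HasDerivWithinAt (fun z => h 0 z / (z - b) ^ d) (powQuotNumerator b d h 0 y / (y - b) ^ (d + 1))
      s y := by
  have hyb : y - b ≠ 0 := sub_ne_zero.2 hy
  refine (hh.fun_div (((hasDerivWithinAt_id y s).sub_const b).fun_pow d)
    (pow_ne_zero d hyb)).congr_deriv ?_
  simp only [powQuotNumerator, id]
  field_simp
  cases d with
  | zero => simp
  | succ d =>
    rw [Nat.add_sub_cancel]
    push_cast
    ring

/-- The `j`-th derivative of `f - T`, where `T` is the Taylor polynomial of degree `c - 1` of `f`
at `b` (so it is `f^(j)` itself once `c ≤ j`). -/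
noncomputable def taylorRemainder (s : Set ℝ) (f : ℝ → ℝ) (b : ℝ) (c j : ℕ) (y : ℝ) : ℝ :=
  iteratedDerivWithin j f s y -
    ∑ i ∈ range (c - j), iteratedDerivWithin (i + j) f s b * (y - b) ^ i / i.factorial

section TaylorRemainder

variable {s : Set ℝ} {f : ℝ → ℝ}

lemma isDerivChain_taylorRemainder (hs : UniqueDiffOn ℝ s) {n : ℕ} (hf : ContDiffOn ℝ n f s)
    (b : ℝ) (c : ℕ) : IsDerivChain s (taylorRemainder s f b c) n := by
  intro j hj y hy
  have hderiv : HasDerivWithinAt (iteratedDerivWithin j f s)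
      (iteratedDerivWithin (j + 1) f s y) s y := by
    rw [iteratedDerivWithin_succ]
    exact (hf.differentiableOn_iteratedDerivWithin (by exact_mod_cast hj) hs y hy).hasDerivWithinAt
  refine (hderiv.fun_sub (hasDerivAt_sum_mul_sub_pow_div_factorial
    (fun i => iteratedDerivWithin (i + j) f s b) b y (c - j)).hasDerivWithinAt).congr_deriv ?_
  simp only [taylorRemainder, Nat.sub_sub, add_assoc, add_comm 1 j]

lemma taylorRemainder_apply_self {b : ℝ} {c j : ℕ} (hj : j < c) :
    taylorRemainder s f b c j b = 0 := by
  obtain ⟨k, hk⟩ := Nat.exists_eq_add_of_lt hj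
  rw [taylorRemainder, show c - j = k + 1 by omega, sum_range_succ']
  simp

lemma taylorRemainder_of_le {b : ℝ} {c j : ℕ} (hj : c ≤ j) :
    taylorRemainder s f b c j = iteratedDerivWithin j f s := by
  ext y
  simp [taylorRemainder, Nat.sub_eq_zero_of_le hj]

lemma divDiff_cons_replicate_eq {b y : ℝ} (hy : y ≠ b) (c : ℕ) :
    divDiff s f (y :: List.replicate c b) = taylorRemainder s f b c 0 y / (y - b) ^ c := by
  have hN := divDiff.cons_eq_sum_add (s := s) (f := f) [] hy c
  simp only [divDiff.singleton, List.nil_append, divDiff.replicate_succ] at hN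
  rw [eq_div_iff (pow_ne_zero c (sub_ne_zero.2 hy)), taylorRemainder, iteratedDerivWithin_zero, hN]
  simp [div_mul_eq_mul_div]

/-- Both sides are the derivative of `z ↦ divDiff s f (z :: List.replicate c b)` at `y`. -/
lemma divDiff_cons_cons_replicate_eq {b y : ℝ} {c : ℕ} (hs : UniqueDiffWithinAt ℝ s y)
    (hf : DifferentiableWithinAt ℝ f s y)
    (hR : HasDerivWithinAt (taylorRemainder s f b c 0) (taylorRemainder s f b c 1 y) s y)
    (hy : y ≠ b) :
    divDiff s f (y :: y :: List.replicate c b) =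
      powQuotNumerator b c (taylorRemainder s f b c) 0 y / (y - b) ^ (c + 1) := by
  have heq : (fun z => divDiff s f (z :: List.replicate c b)) =ᶠ[nhdsWithin y s]
      fun z => taylorRemainder s f b c 0 z / (z - b) ^ c := by
    filter_upwards [nhdsWithin_le_nhds (eventually_ne_nhds hy)] with z hz
    exact divDiff_cons_replicate_eq hz c
  exact hs.eq_deriv _ (divDiff.hasDerivWithinAt_cons_replicate hf hy c)
    ((hasDerivWithinAt_div_sub_pow hR hy c).congr_of_eventuallyEq heq
      (divDiff_cons_replicate_eq hy c))

end TaylorRemainder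

section Icc

variable {a b : ℝ} {f : ℝ → ℝ}

lemma monotoneOn_divDiff_cons_replicate (hab : a < b) (c : ℕ)
    (hf : ContDiffOn ℝ (c + 1 : ℕ) f (Set.Icc a b))
    (hconv : ∀ y ∈ Set.Icc a b, 0 ≤ iteratedDerivWithin (c + 1) f (Set.Icc a b) y) :
    MonotoneOn (fun y => divDiff (Set.Icc a b) f (y :: List.replicate c b)) (Set.Ico a b) := by
  have hR := isDerivChain_taylorRemainder (uniqueDiffOn_Icc hab) hf b c
  set ψ := powQuotNumerator b c (taylorRemainder (Set.Icc a b) f b c)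
  have hψ : IsDerivChain (Set.Icc a b) (fun j y => -ψ j y) c := fun j hj y hy =>
    (hR.powQuotNumerator b c j hj y hy).neg
  have hsign := hψ.neg_one_pow_mul_nonneg
    (fun j hj => by simp [ψ, powQuotNumerator, taylorRemainder_apply_self hj])
    (fun y hy => by
      simp only [ψ, powQuotNumerator, taylorRemainder_of_le le_rfl,
        taylorRemainder_of_le (Nat.le_succ c), sub_self, zero_mul, sub_zero, neg_nonneg]
      exact mul_nonpos_of_nonneg_of_nonpos (hconv y hy) (by linarith [hy.2]))
  have hfd : DifferentiableOn ℝ f (Set.Icc a b) := hf.differentiableOn (by simp)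
  refine monotoneOn_of_forall_hasDerivWithinAt_nonneg (convex_Ico a b)
    (fun y hy => (divDiff.hasDerivWithinAt_cons_replicate (hfd y (Set.Ico_subset_Icc_self hy))
      hy.2.ne c).mono Set.Ico_subset_Icc_self) (fun y hy => ?_)
  have hy' := Set.Ico_subset_Icc_self hy
  rw [divDiff_cons_cons_replicate_eq (uniqueDiffOn_Icc hab y hy') (hfd y hy')
    (hR 0 (by omega) y hy') hy.2.ne]
  refine div_sub_pow_nonneg ?_ hy.2.le
  have := hsign y hy'
  rw [pow_succ]
  linarith

lemma monotoneOn_divDiff_cons_cons_replicate (hab : a < b) (c : ℕ)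
    (hf : ContDiffOn ℝ (c + 2 : ℕ) f (Set.Icc a b))
    (hconv : ∀ y ∈ Set.Icc a b, 0 ≤ iteratedDerivWithin (c + 2) f (Set.Icc a b) y) :
    MonotoneOn (fun y => divDiff (Set.Icc a b) f (y :: y :: List.replicate c b)) (Set.Ico a b) := by
  have hR := isDerivChain_taylorRemainder (uniqueDiffOn_Icc hab) hf b c
  set R := taylorRemainder (Set.Icc a b) f b c
  set ψ := powQuotNumerator b c R
  set χ := powQuotNumerator b (c + 1) ψ
  have hψ : IsDerivChain (Set.Icc a b) ψ (c + 1) := hR.powQuotNumerator b c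
  have hχ : IsDerivChain (Set.Icc a b) χ c := hψ.powQuotNumerator b (c + 1)
  have hχ_top : ∀ y, χ c y = iteratedDerivWithin (c + 2) f (Set.Icc a b) y * (y - b) ^ 2 := by
    intro y
    simp only [χ, ψ, R, powQuotNumerator, taylorRemainder_of_le (Nat.le_succ c),
      taylorRemainder_of_le (Nat.le_add_right c 2)]
    push_cast
    ring
  have hsign := hχ.neg_one_pow_mul_nonneg
    (fun j hj => by simp [χ, ψ, R, powQuotNumerator, taylorRemainder_apply_self hj])
    (fun y hy => hχ_top y ▸ mul_nonneg (hconv y hy) (sq_nonneg _))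
  have hfd : DifferentiableOn ℝ f (Set.Icc a b) := hf.differentiableOn (by simp)
  have hmono : MonotoneOn (fun y => ψ 0 y / (y - b) ^ (c + 1)) (Set.Ico a b) := by
    refine monotoneOn_of_forall_hasDerivWithinAt_nonneg (convex_Ico a b)
      (fun y hy => (hasDerivWithinAt_div_sub_pow (hψ 0 (by omega) y (Set.Ico_subset_Icc_self hy))
        hy.2.ne (c + 1)).mono Set.Ico_subset_Icc_self) (fun y hy => ?_)
    refine div_sub_pow_nonneg ?_ hy.2.le
    simpa [pow_add] using hsign y (Set.Ico_subset_Icc_self hy)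
  refine hmono.congr fun y hy => ?_
  have hy' := Set.Ico_subset_Icc_self hy
  exact (divDiff_cons_cons_replicate_eq (uniqueDiffOn_Icc hab y hy') (hfd y hy')
    (hR 0 (by omega) y hy') hy.2.ne).symm

lemma divDiff_cons_cons_replicate_nonneg (hab : a < b) (c : ℕ)
    (hf : ContDiffOn ℝ (c + 1 : ℕ) f (Set.Icc a b))
    (hconv : ∀ y ∈ Set.Icc a b, 0 ≤ iteratedDerivWithin (c + 1) f (Set.Icc a b) y)
    {x : ℝ} (hx : x ∈ Set.Ioo a b) :
    0 ≤ divDiff (Set.Icc a b) f (x :: a :: List.replicate c b) := by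
  rw [divDiff.cons_cons_replicate hx.1.ne' hx.2.ne hab.ne]
  exact div_nonneg (sub_nonneg.2 (monotoneOn_divDiff_cons_replicate hab c hf hconv
    ⟨le_rfl, hab⟩ ⟨hx.1.le, hx.2⟩ hx.1.le)) (sub_nonneg.2 hx.1.le)

lemma divDiff_cons_cons_cons_replicate_nonneg (hab : a < b) (c : ℕ)
    (hf : ContDiffOn ℝ (c + 2 : ℕ) f (Set.Icc a b))
    (hconv : ∀ y ∈ Set.Icc a b, 0 ≤ iteratedDerivWithin (c + 2) f (Set.Icc a b) y)
    {x : ℝ} (hx : x ∈ Set.Ioo a b) :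
    0 ≤ divDiff (Set.Icc a b) f (x :: a :: a :: List.replicate c b) := by
  rw [divDiff.cons_cons_cons_replicate hx.1.ne' hx.2.ne hab.ne,
    divDiff.cons_cons_replicate hx.1.ne' hx.2.ne hab.ne]
  refine div_nonneg (sub_nonneg.2 ?_) (sub_nonneg.2 hx.1.le)
  rw [le_div_iff₀ (sub_pos.2 hx.1)]
  have hfd : DifferentiableOn ℝ f (Set.Icc a b) := hf.differentiableOn (by simp)
  have hsub : Set.Icc a x ⊆ Set.Ico a b := Set.Icc_subset_Ico_right hx.2
  exact mul_sub_le_sub_of_monotoneOn_deriv hx.1.le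
    (fun y hy => (divDiff.hasDerivWithinAt_cons_replicate
      (hfd y (Set.Ico_subset_Icc_self (hsub hy))) (hsub hy).2.ne c).mono
        (Set.Icc_subset_Icc_right hx.2.le))
    ((monotoneOn_divDiff_cons_cons_replicate hab c hf hconv).mono hsub)

end Icc

noncomputable def chordGap (a b : ℝ) (f : ℝ → ℝ) (x : ℝ) : ℝ :=
  f x - ((b - x) * f a + (x - a) * f b) / (b - a)

section ChordGap

variable {s : Set ℝ} {f : ℝ → ℝ} {a b x : ℝ}

lemma chordGap_left (hab : a ≠ b) : chordGap a b f a = 0 := by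
  simp [chordGap, sub_ne_zero.2 hab.symm]

lemma chordGap_right (hab : a ≠ b) : chordGap a b f b = 0 := by
  simp [chordGap, sub_ne_zero.2 hab.symm]

lemma chordGap_eq (hab : a ≠ b) (x : ℝ) :
    chordGap a b f x = f x - f a - (x - a) * divDiff s f [a, b] := by
  rw [chordGap, divDiff.pair hab]
  field_simp [sub_ne_zero.2 hab.symm]
  ring

lemma chordGap_eq_sum_add (hab : a ≠ b) (hxa : x ≠ a) (hxb : x ≠ b) (c : ℕ) :
    chordGap a b f x =
      ∑ k ∈ Icc 2 (c + 1), divDiff s f (a :: List.replicate k b) * ((x - a) * (x - b) ^ (k - 1)) +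
        divDiff s f (x :: a :: List.replicate (c + 1) b) * ((x - a) * (x - b) ^ (c + 1)) := by
  have hN := divDiff.cons_eq_sum_add (s := s) (f := f) [a] hxb (c + 1)
  simp only [sum_range_succ', List.cons_append, List.nil_append, zero_add, pow_zero, mul_one,
    List.replicate_one] at hN
  have hsum : ∑ k ∈ Icc 2 (c + 1), divDiff s f (a :: List.replicate k b) *
      ((x - a) * (x - b) ^ (k - 1)) =
      (x - a) * ∑ k ∈ range c,
        divDiff s f (a :: List.replicate (k + 1 + 1) b) * (x - b) ^ (k + 1) := by
    rw [sum_Icc_two_eq_sum_range, mul_sum]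
    exact sum_congr rfl fun k _ => by rw [show k + 2 - 1 = k + 1 by omega, mul_left_comm]
  rw [chordGap_eq (s := s) hab, hsum]
  linear_combination divDiff.pair_mul_sub (s := s) (f := f) hxa + (x - a) * hN

lemma chordGap_eq_mul_add_sum_add (hab : a ≠ b) (hxa : x ≠ a) (hxb : x ≠ b) (c : ℕ) :
    chordGap a b f x = divDiff s f [a, a, b] * ((x - a) * (x - b)) +
      ∑ k ∈ Icc 2 (c + 1), divDiff s f (a :: a :: List.replicate k b) *
        ((x - a) ^ 2 * (x - b) ^ (k - 1)) +
        divDiff s f (x :: a :: a :: List.replicate (c + 1) b) *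
          ((x - a) ^ 2 * (x - b) ^ (c + 1)) := by
  have hN := divDiff.cons_eq_sum_add (s := s) (f := f) [a, a] hxb (c + 1)
  simp only [sum_range_succ', List.cons_append, List.nil_append, zero_add, pow_zero, mul_one,
    List.replicate_one] at hN
  have hsum : ∑ k ∈ Icc 2 (c + 1), divDiff s f (a :: a :: List.replicate k b) *
      ((x - a) ^ 2 * (x - b) ^ (k - 1)) =
      (x - a) ^ 2 * ∑ k ∈ range c,
        divDiff s f (a :: a :: List.replicate (k + 1 + 1) b) * (x - b) ^ (k + 1) := by
    rw [sum_Icc_two_eq_sum_range, mul_sum]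
    exact sum_congr rfl fun k _ => by rw [show k + 2 - 1 = k + 1 by omega, mul_left_comm]
  have hxaa : divDiff s f [x, a, a] * (x - a) = divDiff s f [x, a] - divDiff s f [a, a] := by
    have h := divDiff.cons_cons_cons_replicate (s := s) (f := f) hxa hxb hab 0
    rw [List.replicate_zero] at h
    rw [h, div_mul_cancel₀ _ (sub_ne_zero.2 hxa)]
  have haab : divDiff s f [a, a, b] * (b - a) = divDiff s f [a, b] - divDiff s f [a, a] := by
    have h := divDiff.cons_append_singleton (s := s) (f := f) [a] hab
    simp only [List.singleton_append] at h
    rw [h, div_mul_cancel₀ _ (sub_ne_zero.2 hab.symm)]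
  rw [chordGap_eq (s := s) hab, hsum]
  linear_combination divDiff.pair_mul_sub (s := s) (f := f) hxa + (x - a) ^ 2 * hN -
    (x - a) * hxaa + (x - a) * haab

lemma sum_Icc_two_mul_sub_self_pow_eq_zero (d : ℕ → ℝ) (u : ℝ) (c : ℕ) :
    ∑ k ∈ Icc 2 (c + 1), d k * (u * (b - b) ^ (k - 1)) = 0 :=
  sum_eq_zero fun k hk => by
    rw [sub_self, zero_pow (by simp only [mem_Icc] at hk; omega), mul_zero, mul_zero]

lemma neg_one_pow_mul_chordGap_sub_sum_nonneg (hab : a < b) (c : ℕ)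
    (hf : ContDiffOn ℝ (c + 2 : ℕ) f (Set.Icc a b))
    (hconv : ∀ y ∈ Set.Icc a b, 0 ≤ iteratedDerivWithin (c + 2) f (Set.Icc a b) y)
    (hx : x ∈ Set.Icc a b) :
    0 ≤ (-1) ^ (c + 1) * (chordGap a b f x - ∑ k ∈ Icc 2 (c + 1),
      divDiff (Set.Icc a b) f (a :: List.replicate k b) * ((x - a) * (x - b) ^ (k - 1))) := by
  rcases eq_or_ne x a with rfl | hxa
  · simp [chordGap_left hab.ne]
  rcases eq_or_ne x b with rfl | hxb
  · rw [chordGap_right hab.ne, sum_Icc_two_mul_sub_self_pow_eq_zero, sub_zero, mul_zero]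
  rw [chordGap_eq_sum_add hab.ne hxa hxb c, add_sub_cancel_left]
  have hr := divDiff_cons_cons_replicate_nonneg hab (c + 1) hf hconv
    ⟨hx.1.lt_of_ne hxa.symm, hx.2.lt_of_ne hxb⟩
  calc 0 ≤ _ := mul_nonneg (mul_nonneg hr (sub_nonneg.2 hx.1))
        (neg_one_pow_mul_sub_pow_nonneg hx.2 (c + 1))
    _ = _ := by ring

lemma neg_one_pow_mul_chordGap_sub_mul_sub_sum_nonneg (hab : a < b) (c : ℕ)
    (hf : ContDiffOn ℝ (c + 3 : ℕ) f (Set.Icc a b))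
    (hconv : ∀ y ∈ Set.Icc a b, 0 ≤ iteratedDerivWithin (c + 3) f (Set.Icc a b) y)
    (hx : x ∈ Set.Icc a b) :
    0 ≤ (-1) ^ (c + 1) * (chordGap a b f x -
      (divDiff (Set.Icc a b) f [a, a, b] * ((x - a) * (x - b)) + ∑ k ∈ Icc 2 (c + 1),
        divDiff (Set.Icc a b) f (a :: a :: List.replicate k b) *
          ((x - a) ^ 2 * (x - b) ^ (k - 1)))) := by
  rcases eq_or_ne x a with rfl | hxa
  · simp [chordGap_left hab.ne]
  rcases eq_or_ne x b with rfl | hxb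
  · rw [chordGap_right hab.ne, sum_Icc_two_mul_sub_self_pow_eq_zero]
    simp
  rw [chordGap_eq_mul_add_sum_add hab.ne hxa hxb c, add_sub_cancel_left]
  have hr := divDiff_cons_cons_cons_replicate_nonneg hab (c + 1) hf hconv
    ⟨hx.1.lt_of_ne hxa.symm, hx.2.lt_of_ne hxb⟩
  calc 0 ≤ _ := mul_nonneg (mul_nonneg hr (sq_nonneg (x - a)))
        (neg_one_pow_mul_sub_pow_nonneg hx.2 (c + 1))
    _ = _ := by ring

end ChordGap
section PositiveFunctional

variable {E : Type*} (A : (E → ℝ) →ₗ[ℝ] ℝ)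

lemma map_chordGap_comp (hA1 : A (fun _ => (1 : ℝ)) = 1) (a b : ℝ) (f : ℝ → ℝ) (g : E → ℝ) :
    A (fun t => chordGap a b f (g t)) =
      A (fun t => f (g t)) - (b - A g) / (b - a) * f a - (A g - a) / (b - a) * f b := by
  have hfun : (fun t => chordGap a b f (g t)) = (fun t => f (g t)) -
      ((b * f a - a * f b) / (b - a)) • (fun _ => (1 : ℝ)) - ((f b - f a) / (b - a)) • g := by
    ext t
    simp only [chordGap, Pi.sub_apply, Pi.smul_apply, smul_eq_mul]
    ring
  rw [hfun, map_sub, map_sub, map_smul, map_smul, hA1, smul_eq_mul, smul_eq_mul]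
  ring

lemma map_sum_mul (I : Finset ℕ) (d : ℕ → ℝ) (w : ℕ → E → ℝ) :
    A (fun t => ∑ k ∈ I, d k * w k t) = ∑ k ∈ I, d k * A (w k) := by
  have hfun : (fun t => ∑ k ∈ I, d k * w k t) = ∑ k ∈ I, d k • w k := by
    ext t
    simp [Finset.sum_apply]
  simp [hfun, map_sum]

lemma map_mul_add_sum_mul (e : ℝ) (w₀ : E → ℝ) (I : Finset ℕ) (d : ℕ → ℝ) (w : ℕ → E → ℝ) :
    A (fun t => e * w₀ t + ∑ k ∈ I, d k * w k t) = e * A w₀ + ∑ k ∈ I, d k * A (w k) := by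
  rw [← map_sum_mul, ← smul_eq_mul, ← map_smul, ← map_add]
  rfl

lemma mul_map_sub_nonneg (hApos : ∀ h : E → ℝ, (∀ t, 0 ≤ h t) → 0 ≤ A h) {ε : ℝ} {u v : E → ℝ}
    (h : ∀ t, 0 ≤ ε * (u t - v t)) : 0 ≤ ε * (A u - A v) := by
  simpa [map_sub] using hApos (ε • (u - v)) h

end PositiveFunctional

theorem thm23_general {E : Type*}
    (a b : ℝ) (hab : a < b) (n : ℕ) (hn : 3 ≤ n)
    (f : ℝ → ℝ) (hf : ContDiffOn ℝ n f (Set.Icc a b))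
    (hconv : ∀ x ∈ Set.Icc a b, 0 ≤ iteratedDerivWithin n f (Set.Icc a b) x)
    (A : (E → ℝ) →ₗ[ℝ] ℝ)
    (hApos : ∀ h : E → ℝ, (∀ t, 0 ≤ h t) → 0 ≤ A h)
    (hA1 : A (fun _ => (1 : ℝ)) = 1)
    (g : E → ℝ) (hg : ∀ t, g t ∈ Set.Icc a b) :
    (Odd n →
      (∑ k ∈ Finset.Icc 2 (n - 1),
        divDiff (Set.Icc a b) f (a :: List.replicate k b) *
          A (fun t => (g t - a) * (g t - b) ^ (k - 1))) ≤
        A (fun t => f (g t)) - (b - A g) / (b - a) * f a - (A g - a) / (b - a) * f b ∧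
      A (fun t => f (g t)) - (b - A g) / (b - a) * f a - (A g - a) / (b - a) * f b ≤
        divDiff (Set.Icc a b) f [a, a, b] * A (fun t => (g t - a) * (g t - b)) +
        ∑ k ∈ Finset.Icc 2 (n - 2),
          divDiff (Set.Icc a b) f (a :: a :: List.replicate k b) *
            A (fun t => (g t - a) ^ 2 * (g t - b) ^ (k - 1))) ∧
    (Even n →
      A (fun t => f (g t)) - (b - A g) / (b - a) * f a - (A g - a) / (b - a) * f b ≤
        (∑ k ∈ Finset.Icc 2 (n - 1),
          divDiff (Set.Icc a b) f (a :: List.replicate k b) *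
            A (fun t => (g t - a) * (g t - b) ^ (k - 1))) ∧
      divDiff (Set.Icc a b) f [a, a, b] * A (fun t => (g t - a) * (g t - b)) +
        (∑ k ∈ Finset.Icc 2 (n - 2),
          divDiff (Set.Icc a b) f (a :: a :: List.replicate k b) *
            A (fun t => (g t - a) ^ 2 * (g t - b) ^ (k - 1))) ≤
      A (fun t => f (g t)) - (b - A g) / (b - a) * f a - (A g - a) / (b - a) * f b) := by
  obtain ⟨c, rfl⟩ : ∃ c, n = c + 3 := ⟨n - 3, by omega⟩
  rw [show c + 3 - 1 = c + 1 + 1 from rfl, show c + 3 - 2 = c + 1 from rfl]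
  have hlower := mul_map_sub_nonneg A hApos fun t =>
    neg_one_pow_mul_chordGap_sub_sum_nonneg hab (c + 1) hf hconv (hg t)
  have hupper := mul_map_sub_nonneg A hApos fun t =>
    neg_one_pow_mul_chordGap_sub_mul_sub_sum_nonneg hab c hf hconv (hg t)
  rw [map_chordGap_comp A hA1, map_sum_mul] at hlower
  rw [map_chordGap_comp A hA1, map_mul_add_sum_mul] at hupper
  rw [show (-1 : ℝ) ^ (c + 1 + 1) = -(-1) ^ (c + 3) by ring] at hlower
  rw [show (-1 : ℝ) ^ (c + 1) = (-1) ^ (c + 3) by ring] at hupper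
  refine ⟨fun hodd => ?_, fun heven => ?_⟩
  · rw [hodd.neg_one_pow] at hlower hupper
    constructor <;> linarith
  · rw [heven.neg_one_pow] at hlower hupper
    constructor <;> linarith

/-- Theorem 2.3: two-sided Edmundson–Lah–Ribarič type bounds for `n`-convex
functions (`n ≥ 3`); the stated inequalities hold when `n` is odd and are
reversed when `n` is even. -/
theorem thm23 {E : Type*} [Nonempty E]
    (a b : ℝ) (hab : a < b) (n : ℕ) (hn : 3 ≤ n)
    (f : ℝ → ℝ) (hf : ContDiffOn ℝ n f (Set.Icc a b))
    (hconv : ∀ x ∈ Set.Icc a b, 0 ≤ iteratedDerivWithin n f (Set.Icc a b) x)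
    (A : (E → ℝ) →ₗ[ℝ] ℝ)
    (hApos : ∀ h : E → ℝ, (∀ t, 0 ≤ h t) → 0 ≤ A h)
    (hA1 : A (fun _ => (1 : ℝ)) = 1)
    (g : E → ℝ) (hg : ∀ t, g t ∈ Set.Icc a b) :
    (Odd n →
      (∑ k ∈ Finset.Icc 2 (n - 1),
        divDiff (Set.Icc a b) f (a :: List.replicate k b) *
          A (fun t => (g t - a) * (g t - b) ^ (k - 1))) ≤
        A (fun t => f (g t)) - (b - A g) / (b - a) * f a - (A g - a) / (b - a) * f b ∧
      A (fun t => f (g t)) - (b - A g) / (b - a) * f a - (A g - a) / (b - a) * f b ≤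
        divDiff (Set.Icc a b) f [a, a, b] * A (fun t => (g t - a) * (g t - b)) +
        ∑ k ∈ Finset.Icc 2 (n - 2),
          divDiff (Set.Icc a b) f (a :: a :: List.replicate k b) *
            A (fun t => (g t - a) ^ 2 * (g t - b) ^ (k - 1))) ∧
    (Even n →
      A (fun t => f (g t)) - (b - A g) / (b - a) * f a - (A g - a) / (b - a) * f b ≤
        (∑ k ∈ Finset.Icc 2 (n - 1),
          divDiff (Set.Icc a b) f (a :: List.replicate k b) *
            A (fun t => (g t - a) * (g t - b) ^ (k - 1))) ∧
      divDiff (Set.Icc a b) f [a, a, b] * A (fun t => (g t - a) * (g t - b)) +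
        (∑ k ∈ Finset.Icc 2 (n - 2),
          divDiff (Set.Icc a b) f (a :: a :: List.replicate k b) *
            A (fun t => (g t - a) ^ 2 * (g t - b) ^ (k - 1))) ≤
      A (fun t => f (g t)) - (b - A g) / (b - a) * f a - (A g - a) / (b - a) * f b) :=
  thm23_general a b hab n hn f hf hconv A hApos hA1 g hg
end
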